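/- Axiomatisation of Θ_0: the theory Θ_0 is the deductive closure of the single formula ¬X₁, i.e., for every α ∈ Form₁, α ∈ Θ_0 if and only if {¬X₁} ⊢ α. -/
import Mathlib


/-- Formulas of Łukasiewicz infinite-valued propositional logic:
propositional variables `var n` (with `X₁ = var 0`), falsum `⊥`, negation, implication. -/
inductive LForm : Type
  | var : ℕ → LForm
  | bot : LForm
  | neg : LForm → LForm
  | imp : LForm → LForm → LForm

namespace LForm

/-- The propositional variable X₁. -/
def X1 : LForm := var 0

/-- Lattice disjunction: α ∨ β := (α → β) → β. -/
def or (α β : LForm) : LForm := imp (imp α β) β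

/-- Lattice conjunction: α ∧ β := ¬(¬α ∨ ¬β). -/
def and (α β : LForm) : LForm := neg (or (neg α) (neg β))

/-- Biconditional: α ↔ β := (α → β) ∧ (β → α). -/
def iff (α β : LForm) : LForm := and (imp α β) (imp β α)

/-- Strong disjunction: α ⊕ β := ¬α → β. -/
def oplus (α β : LForm) : LForm := imp (neg α) β

/-- The predicate "all variables occurring in the formula are X₁". -/
def onlyX1 : LForm → Prop
  | var n => n = 0
  | bot => True
  | neg α => onlyX1 α
  | imp α β => onlyX1 α ∧ onlyX1 β

end LForm

/-- Form₁: the set of formulas built from the single variable X₁ (and ⊥, ¬, →). -/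
def Form1 : Set LForm := { α | α.onlyX1 }

/-- Provability in Łukasiewicz logic from a set `S` of assumptions: the smallest
relation containing the members of `S` and all instances of the axiom schemata
(A0)–(A4), closed under modus ponens. -/
inductive LProv (S : Set LForm) : LForm → Prop
  | hyp {α : LForm} : α ∈ S → LProv S α
  | a0 (α : LForm) : LProv S (LForm.bot.imp α)
  | a1 (α β : LForm) : LProv S (α.imp (β.imp α))
  | a2 (α β γ : LForm) : LProv S ((α.imp β).imp ((β.imp γ).imp (α.imp γ)))
  | a3 (α β : LForm) : LProv S (((α.imp β).imp β).imp ((β.imp α).imp α))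
  | a4 (α β : LForm) : LProv S ((α.neg.imp β.neg).imp (β.imp α))
  | mp {α β : LForm} : LProv S (α.imp β) → LProv S α → LProv S β

/-- A [0,1]-valued evaluation (possible world) for Łukasiewicz logic. -/
structure LEval where
  w : LForm → ℝ
  mem01 : ∀ α, w α ∈ Set.Icc (0 : ℝ) 1
  map_bot : w LForm.bot = 0
  map_neg : ∀ α, w α.neg = 1 - w α
  map_imp : ∀ α β, w (α.imp β) = min 1 (1 - (w α - w β))

/-- Semantic consequence: every evaluation making all of `S` true (value 1)
makes `α` true. -/
def LSem (S : Set LForm) (α : LForm) : Prop :=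
  ∀ v : LEval, (∀ β ∈ S, v.w β = 1) → v.w α = 1

/-- The evaluation determined compositionally by an atomic assignment `v`. -/
def evalFun (v : ℕ → ℝ) : LForm → ℝ
  | .var n => v n
  | .bot => 0
  | .neg α => 1 - evalFun v α
  | .imp α β => min 1 (1 - (evalFun v α - evalFun v β))

/-- Θ_r: the one-variable formulas true (value 1) in every possible world `w`
with `w(X₁) = r`. -/
def Theta (r : ℝ) : Set LForm :=
  { α | α ∈ Form1 ∧ ∀ v : LEval, v.w LForm.X1 = r → v.w α = 1 }

/-- Θ_T: the one-variable formulas true (value 1) in every possible world `w`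
with `w(X₁) ∈ T`. -/
def ThetaT (T : Set ℝ) : Set LForm :=
  { α | α ∈ Form1 ∧ ∀ v : LEval, v.w LForm.X1 ∈ T → v.w α = 1 }

namespace LukAux

open LForm

variable {S : Set LForm}

theorem syll {a b c : LForm} (h1 : LProv S (a.imp b)) (h2 : LProv S (b.imp c)) :
    LProv S (a.imp c) :=
  LProv.mp (LProv.mp (LProv.a2 a b c) h1) h2

/-- ⊢ ((⊥→α)→α)→α -/
theorem lp5 (α : LForm) : LProv S (((bot.imp α).imp α).imp α) :=
  LProv.mp (LProv.a3 α (bot.imp α))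
    (LProv.mp (LProv.a1 (bot.imp α) (α.imp (bot.imp α))) (LProv.a0 α))

/-- ⊢ α→α -/
theorem lid (α : LForm) : LProv S (α.imp α) :=
  LProv.mp (LProv.mp (LProv.a2 α ((bot.imp α).imp α) α) (LProv.a1 α (bot.imp α))) (lp5 α)

/-- ⊢ ¬b→(b→a) -/
theorem negElim (a b : LForm) : LProv S (b.neg.imp (b.imp a)) :=
  LProv.mp
    (LProv.mp (LProv.a2 b.neg (a.neg.imp b.neg) (b.imp a)) (LProv.a1 b.neg a.neg))
    (LProv.a4 a b)

/-- ⊢ ¬¬c→(d→c) -/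
theorem inner2 (c d : LForm) : LProv S (c.neg.neg.imp (d.imp c)) :=
  LProv.mp
    (LProv.mp (LProv.a2 c.neg.neg (c.neg.imp d.neg) (d.imp c)) (negElim d.neg c.neg))
    (LProv.a4 c d)

/-- ⊢ ¬¬α→α -/
theorem dne (α : LForm) : LProv S (α.neg.neg.imp α) :=
  LProv.mp
    (LProv.mp (LProv.a2 α.neg.neg ((bot.imp α).imp α) α) (inner2 α (bot.imp α)))
    (lp5 α)

/-- ⊢ α→¬¬α -/
theorem dni (α : LForm) : LProv S (α.imp α.neg.neg) :=
  LProv.mp (LProv.a4 α.neg.neg α) (dne α.neg)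

/-- ⊢ ¬⊥ -/
theorem negbot : LProv S (LForm.neg bot) :=
  LProv.mp
    (LProv.mp (LProv.a4 bot.neg (bot.imp bot))
      (syll (dne bot) (LProv.a0 (bot.imp bot).neg)))
    (lid bot)

/-- ⊢ q→((q→p)→p)  (assertion) -/
theorem lassert (p q : LForm) : LProv S (q.imp ((q.imp p).imp p)) :=
  LProv.mp
    (LProv.mp (LProv.a2 q ((p.imp q).imp q) ((q.imp p).imp p)) (LProv.a1 q (p.imp q)))
    (LProv.a3 p q)

/-- rule: from ⊢ X→(Y→Z) and ⊢ Y infer ⊢ X→Z -/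
theorem mp2 {X Y Z : LForm} (h : LProv S (X.imp (Y.imp Z))) (hy : LProv S Y) :
    LProv S (X.imp Z) :=
  syll h (LProv.mp (lassert Z Y) hy)

/-- ⊢ (a→b)→(¬b→¬a)  (contraposition) -/
theorem contrap (a b : LForm) : LProv S ((a.imp b).imp (b.neg.imp a.neg)) := by
  have s1 : LProv S ((a.imp b).imp (a.neg.neg.imp b)) :=
    LProv.mp (LProv.a2 a.neg.neg a b) (dne a)
  have s2 : LProv S ((a.neg.neg.imp b).imp (a.neg.neg.imp b.neg.neg)) :=
    mp2 (LProv.a2 a.neg.neg b b.neg.neg) (dni b)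
  have s4 : LProv S ((a.neg.neg.imp b.neg.neg).imp (b.neg.imp a.neg)) :=
    LProv.a4 a.neg b.neg
  exact syll (syll s1 s2) s4

/-- rule: from ⊢ β and ⊢ ¬γ infer ⊢ ¬(β→γ) -/
theorem negImpIntro {β γ : LForm} (hb : LProv S β) (hg : LProv S γ.neg) :
    LProv S (β.imp γ).neg := by
  have h1 : LProv S ((β.imp γ).imp γ) := LProv.mp (lassert γ β) hb
  exact LProv.mp (LProv.mp (contrap (β.imp γ) γ) h1) hg

/-- rule: from ⊢ ¬β infer ⊢ β→γ -/
theorem impOfNeg {β γ : LForm} (hb : LProv S β.neg) : LProv S (β.imp γ) :=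
  LProv.mp (negElim γ β) hb

/-- rule: from ⊢ γ infer ⊢ β→γ -/
theorem impOfPos {β γ : LForm} (hg : LProv S γ) : LProv S (β.imp γ) :=
  LProv.mp (LProv.a1 γ β) hg

end LukAux

/-- Soundness of the Hilbert system. -/
theorem LProv.sound {S : Set LForm} {α : LForm} (h : LProv S α) : LSem S α := by
  induction h with
  | hyp hmem => intro v hv; exact hv _ hmem
  | mp _ _ ih1 ih2 =>
    intro v hv
    have h1 := ih1 v hv
    have h2 := ih2 v hv
    rename_i a b _ _
    rcases v.mem01 a with ⟨_, _⟩
    rcases v.mem01 b with ⟨_, _⟩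
    rw [v.map_imp] at h1
    rcases le_or_gt 1 (1 - (v.w a - v.w b)) with hle | hlt
    · linarith
    · rw [min_eq_right hlt.le] at h1; linarith
  | a0 a =>
    intro v _
    rcases v.mem01 a with ⟨_, _⟩
    rw [v.map_imp, v.map_bot, min_eq_left] ; linarith
  | a1 a b =>
    intro v _
    rcases v.mem01 a with ⟨_, _⟩
    rcases v.mem01 b with ⟨_, _⟩
    simp only [v.map_imp, min_def]
    split_ifs <;> linarith
  | a2 a b c =>
    intro v _
    rcases v.mem01 a with ⟨_, _⟩
    rcases v.mem01 b with ⟨_, _⟩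
    rcases v.mem01 c with ⟨_, _⟩
    simp only [v.map_imp, min_def]
    split_ifs <;> linarith
  | a3 a b =>
    intro v _
    rcases v.mem01 a with ⟨_, _⟩
    rcases v.mem01 b with ⟨_, _⟩
    simp only [v.map_imp, min_def]
    split_ifs <;> linarith
  | a4 a b =>
    intro v _
    rcases v.mem01 a with ⟨_, _⟩
    rcases v.mem01 b with ⟨_, _⟩
    simp only [v.map_imp, v.map_neg, min_def]
    split_ifs <;> linarith

/-- evalFun with all variables 0 stays in [0,1]. -/
theorem evalFun_mem01 (v : ℕ → ℝ) (hv : ∀ n, v n ∈ Set.Icc (0:ℝ) 1) :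
    ∀ α, evalFun v α ∈ Set.Icc (0:ℝ) 1 := by
  intro α
  induction α with
  | var n => exact hv n
  | bot => exact ⟨le_refl 0, zero_le_one⟩
  | neg a ih => constructor <;> simp only [evalFun] <;> [linarith [ih.2]; linarith [ih.1]]
  | imp a b ih1 ih2 =>
    constructor
    · simp only [evalFun, le_min_iff]
      constructor <;> [norm_num; skip]
      linarith [ih1.2, ih2.1]
    · exact min_le_left _ _

/-- The canonical evaluation with X₁ ↦ 0. -/
noncomputable def zeroEval : LEval where
  w := evalFun (fun _ => 0)
  mem01 := evalFun_mem01 _ (fun _ => ⟨le_refl 0, zero_le_one⟩)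
  map_bot := rfl
  map_neg := fun _ => rfl
  map_imp := fun _ _ => rfl

open LukAux in
/-- Key lemma: at X₁ = 0 every one-variable formula is two-valued, and the
corresponding formula (or its negation) is provable from ¬X₁. -/
theorem key (α : LForm) (hα : α.onlyX1) :
    (evalFun (fun _ => 0) α = 1 ∧ LProv {LForm.X1.neg} α) ∨
    (evalFun (fun _ => 0) α = 0 ∧ LProv {LForm.X1.neg} α.neg) := by
  induction α with
  | var n =>
    right
    rcases hα with rfl
    exact ⟨rfl, LProv.hyp rfl⟩
  | bot => exact Or.inr ⟨rfl, negbot⟩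
  | neg a ih =>
    rcases ih hα with ⟨h1, h2⟩ | ⟨h1, h2⟩
    · right
      refine ⟨by simp [evalFun, h1], ?_⟩
      exact LProv.mp (dni a) h2
    · left
      exact ⟨by simp [evalFun, h1], h2⟩
  | imp a b ih1 ih2 =>
    rcases ih2 hα.2 with ⟨h1, h2⟩ | ⟨h1, h2⟩
    · left
      refine ⟨?_, impOfPos h2⟩
      rcases evalFun_mem01 (fun _ => 0) (fun _ => ⟨le_refl 0, zero_le_one⟩) a with ⟨_, _⟩
      simp only [evalFun, h1]
      rw [min_eq_left] ; linarith
    · rcases ih1 hα.1 with ⟨g1, g2⟩ | ⟨g1, g2⟩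
      · right
        refine ⟨?_, negImpIntro g2 h2⟩
        simp only [evalFun, g1, h1]
        norm_num
      · left
        refine ⟨?_, impOfNeg g2⟩
        simp only [evalFun, g1, h1]
        norm_num

/-- Axiomatisation of Θ₀: for every α ∈ Form₁, α ∈ Θ₀ iff {¬X₁} ⊢ α. -/
theorem Theta_zero_axiomatised (α : LForm) (hα : α ∈ Form1) :
    α ∈ Theta 0 ↔ LProv {LForm.X1.neg} α := by
  constructor
  · intro h
    have h0 := h.2 zeroEval rfl
    rcases key α hα with ⟨_, h2⟩ | ⟨h1, _⟩
    · exact h2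
    · exact absurd h0 (by rw [show zeroEval.w α = evalFun (fun _ => 0) α from rfl, h1]; norm_num)
  · intro h
    refine ⟨hα, fun v hv => ?_⟩
    refine h.sound v ?_
    intro β hβ
    rcases hβ with rfl
    rw [v.map_neg, hv]; norm_num
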